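/- arXiv:2006.11866 — 3 statements merged into one kernel-verified Lean document; each statement's English description precedes it below -/
import Mathlib

section
/- Davenport–Hasse relation for m=2: let q be an odd prime power, φ the quadratic character on F_q, and A any multiplicative character on F_q. Then g(A)·g(φA) = g(A²)·g(φ)·Ā(4), where g denotes the Gauss sum. -/
/-!
Completing the square, `4x(1 - x) = 1 - (1 - 2x)²`, turns `J(A, A) = ∑ A(x(1 - x))` into
`Ā(4) ∑ A(1 - u²)`; since `u² = t` has `1 + φ(t)` solutions and `∑ A(1 - t) = 0`, this is
`Ā(4) J(φ, A)`. Expressing both Jacobi sums through Gauss sums via `g(χ)g(χ') = g(χχ')J(χ, χ')`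
gives the relation when `A² ≠ 1`. Otherwise `A` is `1` or `φ`, since a character of order `2`
is the quadratic character, and both sides agree trivially.
-/

open Finset

variable {F : Type*} [Field F] [Fintype F] [DecidableEq F]

noncomputable instance : Fintype (MulChar F ℂ) := Fintype.ofFinite _

/-- Greene's binomial coefficient `(A choose B) = B(-1)/q * J(A, B⁻¹)`. -/
noncomputable def greeneBinom (A B : MulChar F ℂ) : ℂ :=
  B (-1) / (Fintype.card F : ℂ) * ∑ x : F, A x * B⁻¹ (1 - x)

/-- Greene's finite field hypergeometric series ₂F₁. -/
noncomputable def greeneF21 (A B C : MulChar F ℂ) (x : F) : ℂ :=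
  ((Fintype.card F : ℂ) / ((Fintype.card F : ℂ) - 1)) *
    ∑ χ : MulChar F ℂ, greeneBinom (A * χ) χ * greeneBinom (B * χ) (C * χ) * χ x

/-- Greene's finite field hypergeometric series ₃F₂. -/
noncomputable def greeneF32 (A B C D E : MulChar F ℂ) (x : F) : ℂ :=
  ((Fintype.card F : ℂ) / ((Fintype.card F : ℂ) - 1)) *
    ∑ χ : MulChar F ℂ, greeneBinom (A * χ) χ * greeneBinom (B * χ) (D * χ) *
      greeneBinom (C * χ) (E * χ) * χ x

/-- Greene's finite field hypergeometric series ₄F₃. -/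
noncomputable def greeneF43 (A₀ A₁ A₂ A₃ B₁ B₂ B₃ : MulChar F ℂ) (x : F) : ℂ :=
  ((Fintype.card F : ℂ) / ((Fintype.card F : ℂ) - 1)) *
    ∑ χ : MulChar F ℂ, greeneBinom (A₀ * χ) χ * greeneBinom (A₁ * χ) (B₁ * χ) *
      greeneBinom (A₂ * χ) (B₂ * χ) * greeneBinom (A₃ * χ) (B₃ * χ) * χ x

omit [DecidableEq F] in
lemma ringChar_ne_two_of_orderOf_mulChar_eq_two {R : Type*} [CommRing R] {χ : MulChar F R}
    (hχ : orderOf χ = 2) : ringChar F ≠ 2 := by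
  intro h
  have hdvd := hχ ▸ χ.orderOf_dvd_card_sub_one
  have := FiniteField.even_card_iff_char_two.mp h
  have := Fintype.card_pos (α := F)
  omega

/-- The nonsquares form a single coset of the squares, on which `χ` takes the value `-1`. -/
lemma MulChar.eq_quadraticChar_of_sq_eq_one {R : Type*} [CommRing R] [IsDomain R]
    {χ : MulChar F R} (hχ : χ ≠ 1) (hχ2 : χ ^ 2 = 1) :
    χ = (quadraticChar F).ringHomComp (Int.castRingHom R) := by
  have apply_of_isSquare {a : Fˣ} (ha : IsSquare (a : F)) : χ a = 1 := by
    obtain ⟨b, hb⟩ := ha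
    have hb0 : b ≠ 0 := by rintro rfl; simp at hb
    rw [hb, ← sq, map_pow, ← χ.pow_apply' two_ne_zero, hχ2, MulChar.one_apply hb0.isUnit]
  obtain ⟨a₀, ha₀⟩ := MulChar.ne_one_iff.mp hχ
  have ha₀_sq : ¬IsSquare (a₀ : F) := fun h => ha₀ (apply_of_isSquare h)
  refine MulChar.ext fun a => ?_
  rw [MulChar.ringHomComp_apply]
  by_cases ha : IsSquare (a : F)
  · rw [apply_of_isSquare ha, (quadraticChar_one_iff_isSquare a.ne_zero).mpr ha, map_one]
  · have hprod : IsSquare ((a * a₀ : Fˣ) : F) := by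
      rw [← quadraticChar_one_iff_isSquare (a * a₀).ne_zero, Units.val_mul, map_mul,
        quadraticChar_neg_one_iff_not_isSquare.mpr ha,
        quadraticChar_neg_one_iff_not_isSquare.mpr ha₀_sq, neg_one_mul, neg_neg]
    have hχa₀ : χ a₀ = -1 := by
      have : χ a₀ ^ 2 = 1 := by
        rw [← χ.pow_apply' two_ne_zero, hχ2, MulChar.one_apply_coe]
      exact (sq_eq_one_iff.mp this).resolve_left ha₀
    have hχa := apply_of_isSquare hprod
    rw [Units.val_mul, map_mul, hχa₀, mul_neg_one, neg_eq_iff_eq_neg] at hχa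
    rw [hχa, quadraticChar_neg_one_iff_not_isSquare.mpr ha, map_neg, map_one]

lemma sum_comp_sq {M : Type*} [AddCommGroup M] (hF : ringChar F ≠ 2) (f : F → M) :
    ∑ u : F, f (u ^ 2) = ∑ t : F, (quadraticChar F t + 1) • f t := by
  rw [← sum_fiberwise_of_maps_to (g := fun u : F => u ^ 2) (fun u _ => mem_univ (u ^ 2))]
  refine sum_congr rfl fun t _ => ?_
  rw [sum_congr rfl fun u hu => congrArg f (mem_filter.mp hu).2, sum_const, ← natCast_zsmul,
    ← quadraticChar_card_sqrts hF t, Set.toFinset_ofPred]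

lemma jacobiSum_self_eq_inv_apply_four_mul_jacobiSum {R : Type*} [CommRing R] [IsDomain R]
    (hF : ringChar F ≠ 2) {χ : MulChar F R} (hχ : χ ≠ 1) :
    jacobiSum χ χ = χ⁻¹ 4 * jacobiSum ((quadraticChar F).ringHomComp (Int.castRingHom R)) χ := by
  have h2 : (2 : F) ≠ 0 := Ring.two_ne_zero hF
  have h4 : (4 : F) ≠ 0 := by rw [show (4 : F) = 2 ^ 2 by norm_num]; exact pow_ne_zero 2 h2
  let affine : F ≃ F := (Equiv.mulLeft₀ (-2) (neg_ne_zero.mpr h2)).trans (Equiv.addLeft 1)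
  have complete_sq : jacobiSum χ χ = χ⁻¹ 4 * ∑ u : F, χ (1 - u ^ 2) := by
    rw [MulChar.inv_apply', jacobiSum, mul_sum]
    refine Fintype.sum_equiv affine _ _ fun x => ?_
    rw [← map_mul, ← map_mul]
    congr 1
    simp only [affine, Equiv.trans_apply, Equiv.mulLeft₀_apply, Equiv.coe_addLeft]
    field_simp
    ring
  have sum_shift : ∑ t : F, χ (1 - t) = 0 := by
    rw [Fintype.sum_equiv (Equiv.subLeft 1) (fun t => χ (1 - t)) χ fun t => rfl]
    exact MulChar.sum_eq_zero_of_ne_one hχ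
  rw [complete_sq, sum_comp_sq hF (fun t => χ (1 - t))]
  simp only [add_smul, one_smul, sum_add_distrib, sum_shift, add_zero, jacobiSum,
    MulChar.ringHomComp_apply, zsmul_eq_mul, eq_intCast]

lemma gaussSum_mul_gaussSum_quadraticChar_mul {R : Type*} [Field R] (hF : ringChar F ≠ 2)
    (hR : (Fintype.card F : R) ≠ 0) {ψ : AddChar F R} (hψ : ψ.IsPrimitive) {χ : MulChar F R}
    (hχ : χ ^ 2 ≠ 1) :
    gaussSum χ ψ * gaussSum ((quadraticChar F).ringHomComp (Int.castRingHom R) * χ) ψ =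
      gaussSum (χ ^ 2) ψ * gaussSum ((quadraticChar F).ringHomComp (Int.castRingHom R)) ψ *
        χ⁻¹ 4 := by
  set φ := (quadraticChar F).ringHomComp (Int.castRingHom R)
  have hχ1 : χ ≠ 1 := by rintro rfl; exact hχ (one_pow 2)
  have hφχ : φ * χ ≠ 1 := by
    intro h
    have hφ2 : φ ^ 2 = 1 := ((quadraticChar_isQuadratic F).comp _).sq_eq_one
    exact hχ (by rw [eq_inv_of_mul_eq_one_right h, inv_pow, hφ2, inv_one])
  have hgχ : gaussSum χ ψ ≠ 0 := gaussSum_ne_zero_of_nontrivial hR hχ1 hψ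
  have hχχ := jacobiSum_mul_nontrivial (sq χ ▸ hχ) ψ
  have hφχ' := jacobiSum_mul_nontrivial hφχ ψ
  have hJ := jacobiSum_self_eq_inv_apply_four_mul_jacobiSum hF hχ1
  rw [sq]
  apply mul_left_cancel₀ hgχ
  linear_combination -gaussSum (φ * χ) ψ * hχχ + gaussSum (χ * χ) ψ * gaussSum (φ * χ) ψ * hJ +
    gaussSum (χ * χ) ψ * χ⁻¹ 4 * hφχ'

theorem gaussSum_mul_gaussSum_quad_general (ψ : AddChar F ℂ) (hψ : ψ ≠ 1)
    (φ : MulChar F ℂ) (hφ : orderOf φ = 2) (A : MulChar F ℂ) :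
    gaussSum A ψ * gaussSum (φ * A) ψ = gaussSum (A ^ 2) ψ * gaussSum φ ψ * A⁻¹ (4 : F) := by
  have hF := ringChar_ne_two_of_orderOf_mulChar_eq_two hφ
  have hφ_quad : φ = (quadraticChar F).ringHomComp (Int.castRingHom ℂ) :=
    φ.eq_quadraticChar_of_sq_eq_one (by rintro rfl; simp at hφ) (hφ ▸ pow_orderOf_eq_one φ)
  by_cases hA2 : A ^ 2 = 1
  · have hA4 : A⁻¹ 4 = 1 := by
      have h2 : IsUnit (2 : F) := (Ring.two_ne_zero hF).isUnit
      rw [show (4 : F) = 2 ^ 2 by norm_num, map_pow, ← MulChar.pow_apply' _ two_ne_zero, inv_pow,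
        hA2, inv_one, MulChar.one_apply h2]
    rcases eq_or_ne A 1 with rfl | hA1
    · rw [mul_one, one_pow, hA4, mul_one, mul_comm]
    · obtain rfl : A = φ := (A.eq_quadraticChar_of_sq_eq_one hA1 hA2).trans hφ_quad.symm
      rw [← sq, hA2, hA4, mul_one, mul_comm]
  · subst hφ_quad
    exact gaussSum_mul_gaussSum_quadraticChar_mul hF (by simp) (AddChar.IsPrimitive.of_ne_one hψ) hA2

/-- Davenport–Hasse relation for `m = 2`: `g(A)·g(φA) = g(A²)·g(φ)·Ā(4)`. -/
theorem gaussSum_mul_gaussSum_quad (hq : Odd (Fintype.card F)) (ψ : AddChar F ℂ) (hψ : ψ ≠ 1)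
    (φ : MulChar F ℂ) (hφ : orderOf φ = 2) (A : MulChar F ℂ) :
    gaussSum A ψ * gaussSum (φ * A) ψ = gaussSum (A ^ 2) ψ * gaussSum φ ψ * A⁻¹ (4 : F) :=
  gaussSum_mul_gaussSum_quad_general ψ hψ φ hφ A
end

section
/- For multiplicative characters A, B, C, D on F_q: (1/(q-1))·Σ_{χ} g(Aχ)g(Bχ)g(Cχ̄)g(Dχ̄) = g(AC)g(AD)g(BC)g(BD)/g(ABCD) + q(q-1)·AB(-1)·δ(ABCD), where the sum is over all multiplicative characters χ of F_q^×. -/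
set_option linter.unusedSectionVars false
set_option linter.unusedVariables false
set_option maxHeartbeats 1000000


open Finset

variable {F : Type*} [Field F] [Fintype F] [DecidableEq F]

lemma mc_enough : HasEnoughRootsOfUnity ℂ (Monoid.exponent Fˣ) := by
  have : NeZero ((Monoid.exponent Fˣ : ℂ)) :=
    ⟨Nat.cast_ne_zero.mpr (Monoid.exponent_ne_zero_of_finite)⟩
  infer_instance

lemma card_mulChar : (Fintype.card (MulChar F ℂ) : ℂ) = (Fintype.card F : ℂ) - 1 := by
  have := mc_enough (F := F)
  have h := MulChar.card_eq_card_units_of_hasEnoughRootsOfUnity F ℂ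
  rw [Nat.card_eq_fintype_card, Nat.card_eq_fintype_card, Fintype.card_units] at h
  rw [h]
  have h1 : (1:ℕ) ≤ Fintype.card F := Fintype.card_pos
  push_cast [Nat.cast_sub h1]
  ring

lemma sum_mulChar (a : F) :
    ∑ χ : MulChar F ℂ, χ a = if a = 1 then ((Fintype.card F : ℂ) - 1) else 0 := by
  have := mc_enough (F := F)
  split_ifs with ha
  · simp only [ha, map_one]
    rw [Finset.sum_const, Finset.card_univ, nsmul_eq_mul, mul_one, card_mulChar]
  · obtain ⟨χ₀, hχ₀⟩ := MulChar.exists_apply_ne_one_of_hasEnoughRootsOfUnity F ℂ ha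
    refine eq_zero_of_mul_eq_self_left hχ₀ ?_
    simp only [Finset.mul_sum, ← MulChar.mul_apply]
    exact Fintype.sum_bijective _ (Group.mulLeft_bijective χ₀) _ _ fun χ' ↦ rfl

def rev4 : (F × F × F × F) ≃ (F × F × F × F) where
  toFun p := (p.2.2.2, p.2.2.1, p.2.1, p.1)
  invFun p := (p.2.2.2, p.2.2.1, p.2.1, p.1)
  left_inv p := rfl
  right_inv p := rfl

lemma sum_swap4 {M : Type*} [AddCommMonoid M] {f : F → F → F → F → M} :
    ∑ d : F, ∑ c : F, ∑ b : F, ∑ a : F, f a b c d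
      = ∑ a : F, ∑ b : F, ∑ c : F, ∑ d : F, f a b c d := by
  have h1 : ∑ a : F, ∑ b : F, ∑ c : F, ∑ d : F, f a b c d
      = ∑ p : F × F × F × F, f p.1 p.2.1 p.2.2.1 p.2.2.2 := by
    simp [Fintype.sum_prod_type]
  have h2 : ∑ d : F, ∑ c : F, ∑ b : F, ∑ a : F, f a b c d
      = ∑ p : F × F × F × F, f p.2.2.2 p.2.2.1 p.2.1 p.1 := by
    simp [Fintype.sum_prod_type]
  rw [h1, h2, ← Equiv.sum_comp (rev4 (F := F)) (fun p => f p.1 p.2.1 p.2.2.1 p.2.2.2)]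
  rfl

lemma claim1 (ψ : AddChar F ℂ) (A B C D : MulChar F ℂ) :
    ∑ χ : MulChar F ℂ, gaussSum (A * χ) ψ * gaussSum (B * χ) ψ *
        gaussSum (C * χ⁻¹) ψ * gaussSum (D * χ⁻¹) ψ =
      ((Fintype.card F : ℂ) - 1) * ∑ a : F, ∑ b : F, ∑ t : F,
        A a * B b * C (a*t) * D (b*t⁻¹) * ψ (a*(1+t) + b*(1+t⁻¹)) := by
  have hexp : ∀ χ : MulChar F ℂ, gaussSum (A * χ) ψ * gaussSum (B * χ) ψ *
      gaussSum (C * χ⁻¹) ψ * gaussSum (D * χ⁻¹) ψ =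
      ∑ d : F, ∑ c : F, ∑ b : F, ∑ a : F,
        (A a * B b * C c * D d * ψ (a + b + c + d)) * χ (a*b*(c⁻¹*d⁻¹)) := by
    intro χ
    simp only [gaussSum, Finset.sum_mul, Finset.mul_sum]
    refine Finset.sum_congr rfl fun d _ => Finset.sum_congr rfl fun c _ =>
      Finset.sum_congr rfl fun b _ => Finset.sum_congr rfl fun a _ => ?_
    simp only [MulChar.mul_apply, MulChar.inv_apply' χ, map_mul,
      AddChar.map_add_eq_mul]
    ring
  have hswap : ∀ χ : MulChar F ℂ, ∑ d : F, ∑ c : F, ∑ b : F, ∑ a : F,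
        (A a * B b * C c * D d * ψ (a + b + c + d)) * χ (a*b*(c⁻¹*d⁻¹)) =
      ∑ a : F, ∑ b : F, ∑ c : F, ∑ d : F,
        (A a * B b * C c * D d * ψ (a + b + c + d)) * χ (a*b*(c⁻¹*d⁻¹)) := by
    intro χ
    exact sum_swap4 (f := fun a b c d =>
      (A a * B b * C c * D d * ψ (a + b + c + d)) * χ (a*b*(c⁻¹*d⁻¹)))
  simp only [hexp, hswap]
  rw [Finset.sum_comm, Finset.mul_sum]
  refine Finset.sum_congr rfl fun a _ => ?_
  rw [Finset.sum_comm, Finset.mul_sum]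
  refine Finset.sum_congr rfl fun b _ => ?_
  -- collapse the χ and d sums
  have hX : ∑ χ : MulChar F ℂ, ∑ c : F, ∑ d : F,
      (A a * B b * C c * D d * ψ (a + b + c + d)) * χ (a*b*(c⁻¹*d⁻¹)) =
      ∑ c : F, ((Fintype.card F : ℂ) - 1) *
        (A a * B b * C c * D (a*b*c⁻¹) * ψ (a + b + c + a*b*c⁻¹)) := by
    rw [Finset.sum_comm]
    refine Finset.sum_congr rfl fun c _ => ?_
    rw [Finset.sum_comm]
    have hcollapse : ∀ d : F, ∑ χ : MulChar F ℂ,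
        (A a * B b * C c * D d * ψ (a + b + c + d)) * χ (a*b*(c⁻¹*d⁻¹)) =
        (A a * B b * C c * D d * ψ (a + b + c + d)) *
          (if a*b*(c⁻¹*d⁻¹) = 1 then ((Fintype.card F : ℂ) - 1) else 0) := by
      intro d
      rw [← Finset.mul_sum, sum_mulChar]
    simp only [hcollapse]
    rw [Finset.sum_eq_single (a*b*c⁻¹)]
    · by_cases h0 : a*b*c⁻¹ = 0
      · rw [h0]
        simp [MulChar.map_zero]
      · have hcond : a*b*(c⁻¹*(a*b*c⁻¹)⁻¹) = 1 := by
          have ha : a ≠ 0 := fun h => h0 (by simp [h])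
          have hb : b ≠ 0 := fun h => h0 (by simp [h])
          have hc : c ≠ 0 := fun h => h0 (by simp [h])
          field_simp
        rw [if_pos hcond, mul_comm]
    · intro d _ hd
      have hcond : ¬ (a*b*(c⁻¹*d⁻¹) = 1) := by
        intro hc
        apply hd
        have hdne : d ≠ 0 := by
          intro h
          rw [h] at hc
          simp at hc
        have h2 : a*b*(c⁻¹*d⁻¹)*d = d := by rw [hc, one_mul]
        calc d = a*b*(c⁻¹*d⁻¹)*d := h2.symm
          _ = a*b*c⁻¹*(d⁻¹*d) := by ring
          _ = a*b*c⁻¹ := by rw [inv_mul_cancel₀ hdne, mul_one]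
      rw [if_neg hcond, mul_zero]
    · intro h
      exact absurd (Finset.mem_univ _) h
  rw [hX, ← Finset.mul_sum]
  congr 1
  by_cases ha : a = 0
  · simp [ha, MulChar.map_zero]
  · rw [← Equiv.sum_comp (Equiv.mulLeft₀ a ha)
      (fun c => A a * B b * C c * D (a*b*c⁻¹) * ψ (a + b + c + a*b*c⁻¹))]
    refine Finset.sum_congr rfl fun t _ => ?_
    have h1 : a*b*(a*t)⁻¹ = b*t⁻¹ := by
      rw [mul_inv]
      calc a*b*(a⁻¹*t⁻¹) = (a*a⁻¹)*(b*t⁻¹) := by ring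
        _ = b*t⁻¹ := by rw [mul_inv_cancel₀ ha, one_mul]
    have he : (Equiv.mulLeft₀ a ha) t = a * t := rfl
    rw [he, h1]
    congr 1
    exact congrArg ψ (by ring)

lemma sum_one_mulChar : ∑ a : F, (1 : MulChar F ℂ) a = (Fintype.card F : ℂ) - 1 := by
  calc ∑ a : F, (1 : MulChar F ℂ) a = ∑ _a ∈ univ \ {(0:F)}, (1:ℂ) := by
        rw [Finset.sum_eq_sum_sdiff_singleton_add (mem_univ (0:F)), MulChar.map_zero, add_zero]
        exact Finset.sum_congr rfl fun a ha => MulChar.one_apply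
          (isUnit_iff_ne_zero.mpr (by simpa using (Finset.mem_sdiff.mp ha).2))
    _ = _ := by
        rw [Finset.sum_const, Finset.card_sdiff_of_subset (by simp), Finset.card_univ,
          Finset.card_singleton, nsmul_eq_mul, mul_one]
        have h1 : (1:ℕ) ≤ Fintype.card F := Fintype.card_pos
        push_cast [Nat.cast_sub h1]
        ring

lemma gaussSum_one_char (ψ : AddChar F ℂ) (hψ : ψ ≠ 1) :
    gaussSum (1 : MulChar F ℂ) ψ = -1 := by
  have hsum : ∑ a : F, ψ a = 0 :=
    AddChar.sum_eq_zero_iff_ne_zero.mpr (AddChar.ne_zero_iff.mpr (AddChar.ne_one_iff.mp hψ))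
  have : gaussSum (1 : MulChar F ℂ) ψ = ∑ a ∈ univ \ {(0:F)}, ψ a := by
    rw [gaussSum, Finset.sum_eq_sum_sdiff_singleton_add (mem_univ (0:F)), MulChar.map_zero,
      zero_mul, add_zero]
    exact Finset.sum_congr rfl fun a ha => by
      rw [MulChar.one_apply (isUnit_iff_ne_zero.mpr (by simpa using (Finset.mem_sdiff.mp ha).2)),
        one_mul]
  rw [this, Finset.sum_sdiff_eq_sub (by simp), hsum, Finset.sum_singleton,
    AddChar.map_zero_eq_one, zero_sub]

lemma gauss_ne_zero {ψ : AddChar F ℂ} (hψ : ψ ≠ 1) (χ : MulChar F ℂ) :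
    gaussSum χ ψ ≠ 0 := by
  by_cases hχ : χ = 1
  · rw [hχ, gaussSum_one_char ψ hψ]; norm_num
  · exact gaussSum_ne_zero_of_nontrivial (by exact_mod_cast Fintype.card_ne_zero) hχ
      (AddChar.IsPrimitive.of_ne_one hψ)

lemma chi_neg_one_sq (χ : MulChar F ℂ) : χ (-1) * χ (-1) = 1 := by
  rw [← map_mul, neg_mul_neg, one_mul, map_one]

lemma chi_inv_neg_one (χ : MulChar F ℂ) : χ⁻¹ (-1) = χ (-1) := by
  rw [MulChar.inv_apply', inv_neg, inv_one]

lemma gauss_mul_gauss_inv {ψ : AddChar F ℂ} (hψ : ψ ≠ 1) {χ : MulChar F ℂ} (hχ : χ ≠ 1) :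
    gaussSum χ ψ * gaussSum χ⁻¹ ψ = χ (-1) * (Fintype.card F : ℂ) := by
  have h1 := gaussSum_mul_gaussSum_eq_card hχ (AddChar.IsPrimitive.of_ne_one hψ)
  have h2 := mul_gaussSum_inv_eq_gaussSum χ⁻¹ ψ
  rw [chi_inv_neg_one] at h2
  have hsq := chi_neg_one_sq χ
  rw [← h2]
  linear_combination χ (-1) * h1

lemma sum_mulChar_shift (ψ : AddChar F ℂ) (χ : MulChar F ℂ) (s : F) :
    ∑ a : F, χ a * ψ (a * s) =
      if s = 0 then (if χ = 1 then (Fintype.card F : ℂ) - 1 else 0)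
      else χ s⁻¹ * gaussSum χ ψ := by
  split_ifs with hs hχ
  · simp only [hs, mul_zero, AddChar.map_zero_eq_one, mul_one, hχ]
    exact sum_one_mulChar
  · simp only [hs, mul_zero, AddChar.map_zero_eq_one, mul_one]
    exact MulChar.sum_eq_zero_of_ne_one hχ
  · have hu : IsUnit s := isUnit_iff_ne_zero.mpr hs
    have key := gaussSum_mulShift χ ψ hu.unit
    have h1 : ∑ a : F, χ a * ψ (a * s) = gaussSum χ (ψ.mulShift hu.unit) := by
      rw [gaussSum]
      exact Finset.sum_congr rfl fun a _ => by
        rw [AddChar.mulShift_apply, IsUnit.unit_spec, mul_comm s a]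
    rw [h1, ← key, ← mul_assoc, ← map_mul, IsUnit.unit_spec]
    rw [inv_mul_cancel₀ hs, map_one, one_mul]

lemma claim3 (X Y : MulChar F ℂ) :
    ∑ t : F, X t * Y (1+t) = X (-1) * jacobiSum X Y := by
  rw [jacobiSum, Finset.mul_sum]
  rw [← Equiv.sum_comp (Equiv.neg F) (fun t => X t * Y (1+t))]
  refine Finset.sum_congr rfl fun x _ => ?_
  have h1 : (Equiv.neg F) x = -x := rfl
  rw [h1, show (-x : F) = -1 * x by ring, map_mul, show (1 + -1*x : F) = 1 - x by ring]
  ring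

lemma claim2 (ψ : AddChar F ℂ) (A B C D : MulChar F ℂ) :
    ∑ a : F, ∑ b : F, ∑ t : F,
        A a * B b * C (a*t) * D (b*t⁻¹) * ψ (a*(1+t) + b*(1+t⁻¹)) =
      gaussSum (A*C) ψ * gaussSum (B*D) ψ *
          (∑ t : F, (B*C) t * (A*B*C*D)⁻¹ (1+t)) +
        (if A*C = 1 then ((Fintype.card F:ℂ) - 1) else 0) *
          (if B*D = 1 then ((Fintype.card F:ℂ) - 1) else 0) * (C (-1) * D (-1)) := by
  have e1 : ∀ a : F, ∑ b : F, ∑ t : F,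
      A a * B b * C (a*t) * D (b*t⁻¹) * ψ (a*(1+t) + b*(1+t⁻¹)) =
      ∑ t : F, ∑ b : F, A a * B b * C (a*t) * D (b*t⁻¹) * ψ (a*(1+t) + b*(1+t⁻¹)) :=
    fun a => Finset.sum_comm
  simp only [e1]
  rw [Finset.sum_comm]
  have e2 : ∀ t : F, ∑ a : F, ∑ b : F,
      A a * B b * C (a*t) * D (b*t⁻¹) * ψ (a*(1+t) + b*(1+t⁻¹)) =
      C t * D t⁻¹ * ((∑ a : F, (A*C) a * ψ (a*(1+t))) * (∑ b : F, (B*D) b * ψ (b*(1+t⁻¹)))) := by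
    intro t
    rw [Finset.sum_mul_sum]
    simp only [Finset.mul_sum]
    refine Finset.sum_congr rfl fun a _ => Finset.sum_congr rfl fun b _ => ?_
    simp only [map_mul, MulChar.mul_apply, AddChar.map_add_eq_mul]
    ring
  simp only [e2, sum_mulChar_shift ψ]
  have e4 : ∀ t : F, C t * D t⁻¹ *
      ((if 1+t = 0 then (if A*C = 1 then ((Fintype.card F:ℂ) - 1) else 0)
          else (A*C) (1+t)⁻¹ * gaussSum (A*C) ψ) *
       (if 1+t⁻¹ = 0 then (if B*D = 1 then ((Fintype.card F:ℂ) - 1) else 0)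
          else (B*D) (1+t⁻¹)⁻¹ * gaussSum (B*D) ψ)) =
      gaussSum (A*C) ψ * gaussSum (B*D) ψ * ((B*C) t * (A*B*C*D)⁻¹ (1+t)) +
      (if t = -1 then (if A*C = 1 then ((Fintype.card F:ℂ) - 1) else 0) *
          (if B*D = 1 then ((Fintype.card F:ℂ) - 1) else 0) * (C (-1) * D (-1)) else 0) := by
    intro t
    by_cases ht1 : t = -1
    · subst ht1
      have hc1 : (1 + (-1:F)) = 0 := by ring
      have hc2 : ((-1:F)⁻¹) = -1 := by rw [inv_neg, inv_one]
      rw [hc2, hc1, MulChar.map_zero ((A*B*C*D)⁻¹)]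
      simp only [eq_self_iff_true, if_true]
      ring
    · rw [if_neg ht1, add_zero]
      by_cases ht0 : t = 0
      · subst ht0
        rw [MulChar.map_zero]
        rw [show ((B*C) (0:F)) = 0 from MulChar.map_zero _]
        ring
      · have h1t : (1 : F) + t ≠ 0 := fun h => ht1 (by linear_combination h)
        have h1t' : (1 : F) + t⁻¹ ≠ 0 := by
          intro h
          apply ht1
          have : t⁻¹ = -1 := by linear_combination h
          rw [← inv_inv t, this, inv_neg, inv_one]
        rw [if_neg h1t, if_neg h1t']
        have hu : (1+t⁻¹)⁻¹ = t * (1+t)⁻¹ := by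
          refine inv_eq_of_mul_eq_one_right ?_
          field_simp
          ring
        rw [hu, map_mul, MulChar.inv_apply']
        have hDt : D t⁻¹ * D t = 1 := by
          rw [← map_mul, inv_mul_cancel₀ ht0, MulChar.map_one]
        simp only [MulChar.mul_apply]
        linear_combination (gaussSum (A*C) ψ * gaussSum (B*D) ψ * C t *
          A (1+t)⁻¹ * C (1+t)⁻¹ * B t * B (1+t)⁻¹ * D (1+t)⁻¹) * hDt
  simp only [e4]
  rw [Finset.sum_add_distrib, ← Finset.mul_sum, Finset.sum_ite_eq' Finset.univ (-1 : F)]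
  rw [if_pos (Finset.mem_univ _)]

/-- `(1/(q-1))·Σ_χ g(Aχ)g(Bχ)g(Cχ̄)g(Dχ̄)
  = g(AC)g(AD)g(BC)g(BD)/g(ABCD) + q(q-1)·AB(-1)·δ(ABCD)`. -/
theorem sum_four_gaussSum (hq : Odd (Fintype.card F)) (ψ : AddChar F ℂ) (hψ : ψ ≠ 1)
    (A B C D : MulChar F ℂ) :
    (1 / ((Fintype.card F : ℂ) - 1)) *
        ∑ χ : MulChar F ℂ, gaussSum (A * χ) ψ * gaussSum (B * χ) ψ *
          gaussSum (C * χ⁻¹) ψ * gaussSum (D * χ⁻¹) ψ =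
      gaussSum (A * C) ψ * gaussSum (A * D) ψ * gaussSum (B * C) ψ * gaussSum (B * D) ψ /
          gaussSum (A * B * C * D) ψ +
        (Fintype.card F : ℂ) * ((Fintype.card F : ℂ) - 1) * (A * B) (-1) *
          (if A * B * C * D = 1 then 1 else 0) := by
  have hq0 : (Fintype.card F : ℂ) ≠ 0 := by exact_mod_cast Fintype.card_ne_zero
  have hq1 : (Fintype.card F : ℂ) - 1 ≠ 0 := by
    have h2 : 1 < Fintype.card F := Fintype.one_lt_card
    have : (Fintype.card F : ℂ) ≠ 1 := by exact_mod_cast h2.ne'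
    exact sub_ne_zero.mpr this
  have hunit : IsUnit (-1 : F) := isUnit_one.neg
  have hone : (1 : MulChar F ℂ) (-1) = 1 := MulChar.one_apply hunit
  have hwne : gaussSum (A * B * C * D) ψ ≠ 0 := gauss_ne_zero hψ _
  have hmulACBD : (A*C) * (B*D) = A*B*C*D := by
    rw [mul_mul_mul_comm, ← mul_assoc]
  have hmulADBC : (B*C) * (A*D) = A*B*C*D := by
    rw [mul_mul_mul_comm, mul_comm B A, ← mul_assoc]
  rw [claim1, ← mul_assoc, one_div, inv_mul_cancel₀ hq1, one_mul, claim2,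
    claim3 (B*C) ((A*B*C*D)⁻¹)]
  rw [div_add' _ _ _ hwne, eq_div_iff hwne]
  by_cases hE : A*B*C*D = 1
  · -- E = 1
    have hBD : B*D = (A*C)⁻¹ := eq_inv_of_mul_eq_one_left (by rw [mul_comm, hmulACBD, hE])
    have hAD : A*D = (B*C)⁻¹ := eq_inv_of_mul_eq_one_left (by rw [mul_comm, hmulADBC, hE])
    rw [if_pos hE, hE, inv_one, gaussSum_one_char ψ hψ]
    by_cases hBC : B*C = 1
    · -- BC = 1, AD = 1
      have hAD1 : A*D = 1 := by rw [hAD, hBC, inv_one]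
      have hJ : jacobiSum (B*C) (1 : MulChar F ℂ) = (Fintype.card F : ℂ) - 2 := by
        rw [hBC]; exact jacobiSum_one_one
      rw [hJ, hBC, hAD1, gaussSum_one_char ψ hψ, hone]
      have r3 : B (-1) * C (-1) = 1 := by
        rw [← MulChar.mul_apply, hBC, hone]
      have sA := chi_neg_one_sq A
      have sB := chi_neg_one_sq B
      have sC := chi_neg_one_sq C
      have hbc : B (-1) = C (-1) := by
        linear_combination (C (-1)) * r3 - (B (-1)) * sC
      by_cases hAC : A*C = 1
      · -- all trivial
        have hBD1 : B*D = 1 := by rw [hBD, hAC, inv_one]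
        have r1 : A (-1) * C (-1) = 1 := by rw [← MulChar.mul_apply, hAC, hone]
        have r2 : B (-1) * D (-1) = 1 := by rw [← MulChar.mul_apply, hBD1, hone]
        have hca : C (-1) = A (-1) := by
          linear_combination (A (-1)) * r1 - (C (-1)) * sA
        have hdb : D (-1) = B (-1) := by
          linear_combination (B (-1)) * r2 - (D (-1)) * sB
        rw [if_pos hAC, if_pos hBD1, hAC, hBD1, gaussSum_one_char ψ hψ]
        simp only [MulChar.mul_apply]
        rw [hdb, hbc, hca]
        linear_combination ((Fintype.card F : ℂ) - 1) * sA
      · -- AC ≠ 1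
        have hBDne : B*D ≠ 1 := by
          rw [hBD]; exact inv_ne_one.mpr hAC
        have hg1 : gaussSum (A*C) ψ * gaussSum (B*D) ψ =
            A (-1) * C (-1) * (Fintype.card F : ℂ) := by
          rw [hBD, gauss_mul_gauss_inv hψ hAC, MulChar.mul_apply]
        rw [if_neg hAC, if_neg hBDne]
        simp only [MulChar.mul_apply]
        rw [hbc]
        linear_combination (-((Fintype.card F : ℂ) - 1)) * hg1
    · -- BC ≠ 1 (E = 1)
      have hADne : A*D ≠ 1 := by rw [hAD]; exact inv_ne_one.mpr hBC
      have hJ : jacobiSum (B*C) (1 : MulChar F ℂ) = -1 := by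
        rw [jacobiSum_comm]; exact jacobiSum_one_nontrivial hBC
      have hg2 : gaussSum (B*C) ψ * gaussSum (A*D) ψ =
          B (-1) * C (-1) * (Fintype.card F : ℂ) := by
        rw [hAD, gauss_mul_gauss_inv hψ hBC, MulChar.mul_apply]
      have sA := chi_neg_one_sq A
      have sB := chi_neg_one_sq B
      have sC := chi_neg_one_sq C
      rw [hJ]
      by_cases hAC : A*C = 1
      · have hBD1 : B*D = 1 := by rw [hBD, hAC, inv_one]
        have r1 : A (-1) * C (-1) = 1 := by rw [← MulChar.mul_apply, hAC, hone]
        have r2 : B (-1) * D (-1) = 1 := by rw [← MulChar.mul_apply, hBD1, hone]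
        have hca : C (-1) = A (-1) := by
          linear_combination (A (-1)) * r1 - (C (-1)) * sA
        have hdb : D (-1) = B (-1) := by
          linear_combination (B (-1)) * r2 - (D (-1)) * sB
        rw [if_pos hAC, if_pos hBD1, hAC, hBD1, gaussSum_one_char ψ hψ]
        simp only [MulChar.mul_apply]
        rw [hca] at hg2 ⊢
        rw [hdb]
        linear_combination -hg2
      · have hBDne : B*D ≠ 1 := by rw [hBD]; exact inv_ne_one.mpr hAC
        have hg1 : gaussSum (A*C) ψ * gaussSum (B*D) ψ =
            A (-1) * C (-1) * (Fintype.card F : ℂ) := by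
          rw [hBD, gauss_mul_gauss_inv hψ hAC, MulChar.mul_apply]
        rw [if_neg hAC, if_neg hBDne]
        simp only [MulChar.mul_apply]
        linear_combination (B (-1) * C (-1) - gaussSum (A*D) ψ * gaussSum (B*C) ψ) * hg1
          + (-(A (-1) * C (-1) * (Fintype.card F : ℂ))) * hg2
          + (-((Fintype.card F : ℂ) * ((Fintype.card F : ℂ) - 1) * A (-1) * B (-1))) * sC
  · -- E ≠ 1
    rw [if_neg hE]
    have hδ : (if A*C = 1 then ((Fintype.card F:ℂ) - 1) else 0) *
        (if B*D = 1 then ((Fintype.card F:ℂ) - 1) else 0) = 0 := by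
      by_cases h1 : A*C = 1
      · rw [if_neg (show B*D ≠ 1 from fun h2 => hE (by rw [← hmulACBD, h1, h2, mul_one])),
          mul_zero]
      · rw [if_neg h1, zero_mul]
    rw [hδ, zero_mul, add_zero]
    by_cases hBC : B*C = 1
    · -- BC = 1, so AD = E
      have hADE : A*D = A*B*C*D := by rw [← hmulADBC, hBC, one_mul]
      have hJ : jacobiSum (B*C) (A*B*C*D)⁻¹ = -1 := by
        rw [hBC]; exact jacobiSum_one_nontrivial (inv_ne_one.mpr hE)
      rw [hJ, hBC, hone, hADE, gaussSum_one_char ψ hψ]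
      ring
    · by_cases hAD : A*D = 1
      · -- AD = 1, BC = E
        have hBCE : B*C = A*B*C*D := by rw [← hmulADBC, hAD, mul_one]
        have hJ : jacobiSum (B*C) (A*B*C*D)⁻¹ = -((B*C) (-1)) := by
          rw [← hBCE]; exact jacobiSum_nontrivial_inv hBC
        have sB := chi_neg_one_sq B
        have sC := chi_neg_one_sq C
        rw [hJ, hAD, gaussSum_one_char ψ hψ, ← hBCE]
        simp only [MulChar.mul_apply]
        linear_combination
          (-(gaussSum (A*C) ψ * gaussSum (B*D) ψ * gaussSum (B*C) ψ * B (-1) * B (-1))) * sC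
          + (-(gaussSum (A*C) ψ * gaussSum (B*D) ψ * gaussSum (B*C) ψ)) * sB
      · -- generic case
        have hid : (B*C) * (A*B*C*D)⁻¹ = (A*D)⁻¹ := by
          rw [← hmulADBC, mul_inv, ← mul_assoc, mul_inv_cancel, one_mul]
        have hJ' : gaussSum (A*D)⁻¹ ψ * jacobiSum (B*C) (A*B*C*D)⁻¹ =
            gaussSum (B*C) ψ * gaussSum (A*B*C*D)⁻¹ ψ := by
          have h := jacobiSum_mul_nontrivial
            (show (B*C) * (A*B*C*D)⁻¹ ≠ 1 by rw [hid]; exact inv_ne_one.mpr hAD) ψ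
          rw [hid] at h
          exact h
        have hw : gaussSum (A*B*C*D) ψ * gaussSum (A*B*C*D)⁻¹ ψ =
            A (-1) * B (-1) * C (-1) * D (-1) * (Fintype.card F : ℂ) := by
          rw [gauss_mul_gauss_inv hψ hE]
          simp only [MulChar.mul_apply]
        have hu : gaussSum (A*D) ψ * gaussSum (A*D)⁻¹ ψ =
            A (-1) * D (-1) * (Fintype.card F : ℂ) := by
          rw [gauss_mul_gauss_inv hψ hAD, MulChar.mul_apply]
        have sB := chi_neg_one_sq B
        have sC := chi_neg_one_sq C
        simp only [MulChar.mul_apply]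
        refine mul_left_cancel₀ (gauss_ne_zero hψ ((A*D)⁻¹)) ?_
        linear_combination
          (gaussSum (A*C) ψ * gaussSum (B*D) ψ * B (-1) * C (-1)
              * gaussSum (A*B*C*D) ψ) * hJ'
          + (gaussSum (A*C) ψ * gaussSum (B*D) ψ * gaussSum (B*C) ψ * B (-1) * C (-1)) * hw
          - (gaussSum (A*C) ψ * gaussSum (B*C) ψ * gaussSum (B*D) ψ) * hu
          + (gaussSum (A*C) ψ * gaussSum (B*C) ψ * gaussSum (B*D) ψ * (Fintype.card F : ℂ)
              * A (-1) * D (-1) * B (-1) * B (-1)) * sC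
          + (gaussSum (A*C) ψ * gaussSum (B*C) ψ * gaussSum (B*D) ψ * (Fintype.card F : ℂ)
              * A (-1) * D (-1)) * sB
end

section
/- For multiplicative characters A, B, C on F_q: (A choose B)·(C choose A) = (C choose B)·(C·B̄ choose A·B̄) - ((q-1)/q²)·B(-1)·δ(A) + ((q-1)/q²)·A·B(-1)·δ(B·C̄). -/
open Finset

variable {F : Type*} [Field F] [Fintype F] [DecidableEq F]

/-!
Clearing the normalisations, the identity becomes the Jacobi-sum relation
`J(A, B̄) J(C, Ā) = B(-1) J(C, B̄) J(CB̄, BĀ) + ∑ CB̄ - ∑ Ā`, where `∑ χ = (q - 1) δ(χ)`.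
It is associativity of Jacobi sums: `∑_{x + y + z = 1} χ₁(x) χ₂(y) χ₃(z)` equals
`J(χ₁, χ₂) J(χ₁χ₂, χ₃) + χ₂(-1) ∑ χ₁χ₂` (group by `x + y`; the fibre `x + y = 0` gives the
correction) and, by the symmetry `x ↔ z`, also `J(χ₂, χ₃) J(χ₁, χ₂χ₃) + χ₂(-1) ∑ χ₂χ₃`.
Take `(χ₁, χ₂, χ₃) = (C, B̄, BĀ)` and rewrite `J(B̄, BĀ) = B(-1) J(A, B̄)` by the reflection
`J(χ, ψ) = χ(-1) J(χ, (χψ)⁻¹)`.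
-/

lemma MulChar.apply_neg_one_mul_self {K R : Type*} [CommRing K] [CommRing R] (χ : MulChar K R) :
    χ (-1) * χ (-1) = 1 := by
  rw [← map_mul, neg_one_mul, neg_neg, map_one]

lemma MulChar.inv_apply_neg_one {K R : Type*} [Field K] [CommRing R] (χ : MulChar K R) :
    χ⁻¹ (-1) = χ (-1) := by
  rw [MulChar.inv_apply', inv_neg, inv_one]

/-- The Jacobi sum `∑_{x + y + z = 1} χ₁ x χ₂ y χ₃ z` of three multiplicative characters. -/
def jacobiSum₃ {R R' : Type*} [CommRing R] [Fintype R] [CommRing R'] (χ₁ χ₂ χ₃ : MulChar R R') :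
    R' :=
  ∑ x, ∑ y, χ₁ x * χ₂ y * χ₃ (1 - x - y)

lemma jacobiSum₃_reverse {R R' : Type*} [CommRing R] [Fintype R] [CommRing R']
    (χ₁ χ₂ χ₃ : MulChar R R') : jacobiSum₃ χ₁ χ₂ χ₃ = jacobiSum₃ χ₃ χ₂ χ₁ := by
  rw [jacobiSum₃, jacobiSum₃, Finset.sum_comm]
  conv_rhs => rw [Finset.sum_comm]
  refine Finset.sum_congr rfl fun y _ ↦ ?_
  rw [← (Equiv.subLeft (1 - y)).sum_comp]
  refine Finset.sum_congr rfl fun z _ ↦ ?_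
  rw [Equiv.subLeft_apply, show 1 - (1 - y - z) - y = z by ring, show 1 - y - z = 1 - z - y by ring]
  ring

section FiniteField

variable {K R : Type*} [Field K] [Fintype K] [CommRing R]

lemma MulChar.sum_eq_mul_ite [IsDomain R] [DecidableEq K] [DecidableEq (MulChar K R)]
    (χ : MulChar K R) : ∑ x, χ x = ((Fintype.card K : R) - 1) * if χ = 1 then 1 else 0 := by
  split_ifs with hχ
  · rw [hχ, MulChar.sum_one_eq_card_units, Fintype.card_eq_card_units_add_one (α := K)]
    push_cast
    ring
  · rw [MulChar.sum_eq_zero_of_ne_one hχ, mul_zero]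

/-- The substitution `x ↦ x / (x - 1)` is an involution of `K \ {0, 1}`. -/
lemma jacobiSum_eq_apply_neg_one_mul_jacobiSum [DecidableEq K] (χ ψ : MulChar K R) :
    jacobiSum χ ψ = χ (-1) * jacobiSum χ (χ * ψ)⁻¹ := by
  rw [jacobiSum_eq_sum_sdiff, jacobiSum_eq_sum_sdiff, Finset.mul_sum]
  have mem {x : K} : x ∈ univ \ {0, 1} ↔ x ≠ 0 ∧ x ≠ 1 := by simp
  have maps_to {x : K} (hx : x ∈ univ \ {0, 1}) : x / (x - 1) ∈ univ \ {0, 1} := by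
    obtain ⟨hx0, hx1⟩ := mem.mp hx
    have hx1' : x - 1 ≠ 0 := sub_ne_zero.mpr hx1
    exact mem.mpr ⟨div_ne_zero hx0 hx1', fun h ↦
      one_ne_zero (sub_eq_self.mp ((div_eq_one_iff_eq hx1').mp h).symm)⟩
  have involutive {x : K} (hx : x ∈ univ \ {0, 1}) : x / (x - 1) / (x / (x - 1) - 1) = x := by
    have : x - 1 ≠ 0 := sub_ne_zero.mpr (mem.mp hx).2
    field_simp
    ring
  refine Finset.sum_nbij' (fun x ↦ x / (x - 1)) (fun x ↦ x / (x - 1)) (fun x hx ↦ maps_to hx)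
    (fun x hx ↦ maps_to hx) (fun x hx ↦ involutive hx) (fun x hx ↦ involutive hx) fun x hx ↦ ?_
  have h1x : 1 - x ≠ 0 := sub_ne_zero.mpr (mem.mp hx).2.symm
  have hsub : 1 - x / (x - 1) = (1 - x)⁻¹ := by
    rw [← neg_sub 1 x]
    field_simp
    ring
  have hneg : -1 * (x / (x - 1)) = x * (1 - x)⁻¹ := by
    rw [← neg_sub 1 x]
    field_simp
  calc χ x * ψ (1 - x) = χ (x * (1 - x)⁻¹) * χ (1 - x) * ψ (1 - x) := by
        rw [map_mul, mul_assoc (χ x), ← map_mul, inv_mul_cancel₀ h1x, map_one, mul_one]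
    _ = χ (-1 * (x / (x - 1))) * (χ * ψ)⁻¹ (1 - x / (x - 1)) := by
        rw [hneg, hsub, MulChar.inv_apply', inv_inv, MulChar.mul_apply, mul_assoc]
    _ = χ (-1) * (χ (x / (x - 1)) * (χ * ψ)⁻¹ (1 - x / (x - 1))) := by
        rw [map_mul, mul_assoc]

lemma sum_mul_apply_sub_eq_mul_jacobiSum (χ ψ : MulChar K R) {s : K} (hs : s ≠ 0) :
    ∑ x, χ x * ψ (s - x) = (χ * ψ) s * jacobiSum χ ψ := by
  rw [jacobiSum, Finset.mul_sum, ← Equiv.sum_comp (Equiv.mulLeft₀ s hs)]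
  refine Finset.sum_congr rfl fun y _ ↦ ?_
  rw [Equiv.mulLeft₀_apply, ← mul_one_sub, map_mul, map_mul, MulChar.mul_apply]
  ring

lemma sum_mul_apply_neg (χ ψ : MulChar K R) :
    ∑ x, χ x * ψ (-x) = ψ (-1) * ∑ x, (χ * ψ) x := by
  rw [Finset.mul_sum]
  refine Finset.sum_congr rfl fun x _ ↦ ?_
  rw [neg_eq_neg_one_mul x, map_mul, MulChar.mul_apply]
  ring

lemma jacobiSum₃_eq (χ₁ χ₂ χ₃ : MulChar K R) :
    jacobiSum₃ χ₁ χ₂ χ₃ =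
      jacobiSum χ₁ χ₂ * jacobiSum (χ₁ * χ₂) χ₃ + χ₂ (-1) * ∑ x, (χ₁ * χ₂) x := by
  classical
  have fibre (s : K) : ∑ x, χ₁ x * χ₂ (s - x) =
      (χ₁ * χ₂) s * jacobiSum χ₁ χ₂ + if s = 0 then χ₂ (-1) * ∑ x, (χ₁ * χ₂) x else 0 := by
    rcases eq_or_ne s 0 with rfl | hs
    · simp only [zero_sub, sum_mul_apply_neg, MulChar.map_zero, zero_mul, if_pos, zero_add]
    · rw [sum_mul_apply_sub_eq_mul_jacobiSum χ₁ χ₂ hs, if_neg hs, add_zero]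
  have shift (x : K) : ∑ y, χ₁ x * χ₂ y * χ₃ (1 - x - y) =
      ∑ s, χ₁ x * χ₂ (s - x) * χ₃ (1 - s) := by
    rw [← Equiv.sum_comp (Equiv.subRight x)]
    simp only [Equiv.subRight_apply, sub_sub_sub_cancel_right]
  calc jacobiSum₃ χ₁ χ₂ χ₃ = ∑ s, (∑ x, χ₁ x * χ₂ (s - x)) * χ₃ (1 - s) := by
        simp only [jacobiSum₃, shift, Finset.sum_mul]
        exact Finset.sum_comm
    _ = _ := by
        simp only [fibre, add_mul, Finset.sum_add_distrib, ite_mul, zero_mul, Finset.sum_ite_eq',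
          Finset.mem_univ, if_true, sub_zero, map_one, mul_one]
        simp only [mul_comm _ (jacobiSum χ₁ χ₂), mul_assoc, ← Finset.mul_sum]
        rfl

lemma jacobiSum_mul_jacobiSum_assoc (χ₁ χ₂ χ₃ : MulChar K R) :
    jacobiSum χ₁ χ₂ * jacobiSum (χ₁ * χ₂) χ₃ + χ₂ (-1) * ∑ x, (χ₁ * χ₂) x =
      jacobiSum χ₂ χ₃ * jacobiSum χ₁ (χ₂ * χ₃) + χ₂ (-1) * ∑ x, (χ₂ * χ₃) x := by
  rw [← jacobiSum₃_eq, jacobiSum₃_reverse, jacobiSum₃_eq, jacobiSum_comm χ₃, mul_comm χ₃,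
    jacobiSum_comm _ χ₁]

lemma jacobiSum_inv_mul_jacobiSum_inv [DecidableEq K] (A B C : MulChar K R) :
    jacobiSum A B⁻¹ * jacobiSum C A⁻¹ =
      B (-1) * (jacobiSum C B⁻¹ * jacobiSum (C * B⁻¹) (A * B⁻¹)⁻¹) +
        ∑ x, (C * B⁻¹) x - ∑ x, A⁻¹ x := by
  have hassoc := jacobiSum_mul_jacobiSum_assoc C B⁻¹ (A * B⁻¹)⁻¹
  rw [show B⁻¹ * (A * B⁻¹)⁻¹ = A⁻¹ by group, jacobiSum_eq_apply_neg_one_mul_jacobiSum B⁻¹,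
    show (B⁻¹ * (A * B⁻¹)⁻¹)⁻¹ = A by group, jacobiSum_comm B⁻¹ A,
    MulChar.inv_apply_neg_one] at hassoc
  linear_combination -B (-1) * hassoc - (jacobiSum A B⁻¹ * jacobiSum C A⁻¹ + ∑ x, A⁻¹ x -
    ∑ x, (C * B⁻¹) x) * B.apply_neg_one_mul_self

end FiniteField

/-- `(A choose B)(C choose A) = (C choose B)(CB̄ choose AB̄)
  - ((q-1)/q²)·B(-1)·δ(A) + ((q-1)/q²)·AB(-1)·δ(BC̄)`. -/
theorem greeneBinom_mul_greeneBinom (A B C : MulChar F ℂ) :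
    greeneBinom A B * greeneBinom C A =
      greeneBinom C B * greeneBinom (C * B⁻¹) (A * B⁻¹) -
        ((Fintype.card F : ℂ) - 1) / (Fintype.card F : ℂ) ^ 2 * B (-1) *
          (if A = 1 then 1 else 0) +
        ((Fintype.card F : ℂ) - 1) / (Fintype.card F : ℂ) ^ 2 * (A * B) (-1) *
          (if B * C⁻¹ = 1 then 1 else 0) := by
  have key := jacobiSum_inv_mul_jacobiSum_inv A B C
  simp only [MulChar.sum_eq_mul_ite, mul_inv_eq_one, inv_eq_one, eq_comm (a := C)] at key ⊢
  have hA : A (-1) * (if A = 1 then (1 : ℂ) else 0) = if A = 1 then 1 else 0 := by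
    split_ifs with h
    · rw [h, MulChar.one_apply isUnit_one.neg, mul_one]
    · rw [mul_zero]
  simp only [greeneBinom, ← jacobiSum.eq_1]
  rw [MulChar.mul_apply A B⁻¹, MulChar.mul_apply A B, MulChar.inv_apply_neg_one]
  linear_combination (A (-1) * B (-1) / (Fintype.card F : ℂ) ^ 2) * key -
    (((Fintype.card F : ℂ) - 1) * B (-1) / (Fintype.card F : ℂ) ^ 2) * hA
end
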